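/- Let 1 ≤ δ ≤ σ, ρ₀ > 0, and for ρ with ρ₀/4 ≤ ρ ≤ ρ₀ define M_{ρ,β} = ρ^{|β|+1}(|β|+1)^{6+2σ}/((β₂!)^{σ-δ}(|β|!)^δ). Then there is a constant C > 0 such that for all β ∈ ℤ₊² and all γ ≤ β with ⌊|β|/2⌋+1 ≤ |γ| ≤ |β|, one has binom(β,γ) · M_{ρ,β}/(M_{ρ,γ} · M_{ρ,β-γ+(0,1)}) ≤ C/(|β|-|γ|+1)^6. -/
import Mathlib

lemma choose_mul_choose_le' (b1 b2 g1 g2 : ℕ) :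
    b1.choose g1 * b2.choose g2 ≤ (b1 + b2).choose (g1 + g2) := by
  rw [Nat.add_choose_eq]
  exact Finset.single_le_sum (f := fun ij : ℕ × ℕ => b1.choose ij.1 * b2.choose ij.2)
    (fun _ _ => Nat.zero_le _) (a := (g1, g2)) (by simp)

lemma aux_div (a n1 d1 n2 d2 n3 d3 K C : ℝ) (hd1 : 0 < d1) (hn2 : 0 < n2) (hd2 : 0 < d2)
    (hn3 : 0 < n3) (hd3 : 0 < d3) (hK : 0 < K)
    (h : a * n1 * K * (d2 * d3) ≤ C * ((n2 * n3) * d1)) :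
    a * (n1 / d1) / (n2 / d2 * (n3 / d3)) ≤ C / K := by
  rw [div_le_div_iff₀ (by positivity) hK]
  calc a * (n1 / d1) * K = (a * n1 * K) / d1 := by ring
    _ ≤ (C * (n2 * n3)) / (d2 * d3) := by
        rw [div_le_div_iff₀ hd1 (by positivity)]; nlinarith [h]
    _ = C * (n2 / d2 * (n3 / d3)) := by ring

/-- `M_{ρ,β} = ρ^{|β|+1} (|β|+1)^{6+2σ} / ((β₂!)^{σ-δ} (|β|!)^δ)` for `β ∈ ℤ₊²`. -/
noncomputable def Mr (σ δ ρ : ℝ) (β : ℕ × ℕ) : ℝ :=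
  ρ ^ (β.1 + β.2 + 1) * (((β.1 + β.2 : ℕ) : ℝ) + 1) ^ (6 + 2 * σ) /
    ((Nat.factorial β.2 : ℝ) ^ (σ - δ) * (Nat.factorial (β.1 + β.2) : ℝ) ^ δ)

theorem binom_M_shift_bound_high (σ δ ρ₀ : ℝ) (hσ : 1 ≤ σ) (hδ : 1 ≤ δ) (hδσ : δ ≤ σ)
    (hρ₀ : 0 < ρ₀) :
    ∃ C > 0, ∀ ρ : ℝ, ρ₀ / 4 ≤ ρ → ρ ≤ ρ₀ →
      ∀ β γ : ℕ × ℕ, γ.1 ≤ β.1 → γ.2 ≤ β.2 →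
        (β.1 + β.2) / 2 + 1 ≤ γ.1 + γ.2 → γ.1 + γ.2 ≤ β.1 + β.2 →
        (Nat.choose β.1 γ.1 : ℝ) * (Nat.choose β.2 γ.2 : ℝ) * Mr σ δ ρ β /
            (Mr σ δ ρ γ * Mr σ δ ρ (β.1 - γ.1, β.2 - γ.2 + 1)) ≤
          C / ((((β.1 + β.2) - (γ.1 + γ.2) : ℕ) : ℝ) + 1) ^ 6 := by
  refine ⟨2 ^ (6 + 2 * σ) * (16 / ρ₀ ^ 2), by positivity, ?_⟩
  intro ρ hρl hρu β γ hg1 hg2 hlow hhigh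
  obtain ⟨b1, b2⟩ := β
  obtain ⟨g1, g2⟩ := γ
  simp only [Mr] at *
  have hρ : 0 < ρ := lt_of_lt_of_le (by positivity) hρl
  rw [show b1 - g1 + (b2 - g2 + 1) = (b1 + b2 - (g1 + g2)) + 1 from by omega]
  set b := b1 + b2 with hb
  set g := g1 + g2 with hgdef
  set kk := b - g with hk
  have hσδ : (0:ℝ) ≤ σ - δ := by linarith
  apply aux_div _ _ _ _ _ _ _ _ _ (by positivity) (by positivity) (by positivity)
    (by positivity) (by positivity) (by positivity)
  have hkcast : ((kk + 1 : ℕ) : ℝ) = (kk : ℝ) + 1 := by push_cast; ring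
  rw [hkcast]
  -- sub-inequality 1: powers of ρ
  have hρpow : ρ ^ (b + 1) ≤ 16 / ρ₀ ^ 2 * (ρ ^ (g + 1) * ρ ^ (kk + 1 + 1)) := by
    have hsum : ρ ^ (g + 1) * ρ ^ (kk + 1 + 1) = ρ ^ (b + 1) * ρ ^ 2 := by
      rw [← pow_add, ← pow_add]; congr 1; omega
    have hsq : ρ₀ ^ 2 / 16 ≤ ρ ^ 2 := by nlinarith
    have h1 : (1 : ℝ) ≤ 16 / ρ₀ ^ 2 * ρ ^ 2 := by
      rw [div_mul_eq_mul_div, le_div_iff₀ (by positivity)]; nlinarith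
    calc ρ ^ (b + 1) = ρ ^ (b + 1) * 1 := by ring
      _ ≤ ρ ^ (b + 1) * (16 / ρ₀ ^ 2 * ρ ^ 2) := by
          exact mul_le_mul_of_nonneg_left h1 (by positivity)
      _ = 16 / ρ₀ ^ 2 * (ρ ^ (g + 1) * ρ ^ (kk + 1 + 1)) := by rw [hsum]; ring
  -- sub-inequality 2: the (|β|+1)^(6+2σ) factor
  have hpow2 : ((b : ℝ) + 1) ^ (6 + 2 * σ) ≤ 2 ^ (6 + 2 * σ) * ((g : ℝ) + 1) ^ (6 + 2 * σ) := by
    have hb2g : ((b : ℝ) + 1) ≤ 2 * ((g : ℝ) + 1) := by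
      have : b + 1 ≤ 2 * (g + 1) := by omega
      exact_mod_cast this
    calc ((b : ℝ) + 1) ^ (6 + 2 * σ) ≤ (2 * ((g : ℝ) + 1)) ^ (6 + 2 * σ) :=
          Real.rpow_le_rpow (by positivity) hb2g (by linarith)
      _ = 2 ^ (6 + 2 * σ) * ((g : ℝ) + 1) ^ (6 + 2 * σ) :=
          Real.mul_rpow (by norm_num) (by positivity)
  -- sub-inequality 3: binomials, factorials, (k+1)^6
  have hA : (Nat.factorial g2) * Nat.factorial (b2 - g2 + 1)
      ≤ Nat.factorial b2 * (b2 - g2 + 1) := by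
    have h0 := Nat.choose_mul_factorial_mul_factorial hg2
    have h1 : 1 ≤ b2.choose g2 := Nat.choose_pos hg2
    calc Nat.factorial g2 * Nat.factorial (b2 - g2 + 1)
        ≤ b2.choose g2 * (Nat.factorial g2 * Nat.factorial (b2 - g2 + 1)) :=
          Nat.le_mul_of_pos_left _ h1
      _ = (b2.choose g2 * Nat.factorial g2 * Nat.factorial (b2 - g2)) * (b2 - g2 + 1) := by
          rw [Nat.factorial_succ]; ring
      _ = Nat.factorial b2 * (b2 - g2 + 1) := by rw [h0]
  have h3a : ((Nat.factorial g2 : ℝ) * (Nat.factorial (b2 - g2 + 1) : ℝ)) ^ (σ - δ)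
      ≤ ((Nat.factorial b2 : ℝ) * (((b2 - g2 : ℕ) : ℝ) + 1)) ^ (σ - δ) := by
    apply Real.rpow_le_rpow (by positivity) _ hσδ
    exact_mod_cast hA
  have idB : b.choose g * (Nat.factorial g * Nat.factorial (kk + 1))
      = Nat.factorial b * (kk + 1) := by
    have h0 := Nat.choose_mul_factorial_mul_factorial hhigh
    calc b.choose g * (Nat.factorial g * Nat.factorial (kk + 1))
        = (b.choose g * Nat.factorial g * Nat.factorial (b - g)) * (kk + 1) := by
          rw [Nat.factorial_succ, ← hk]; ring
      _ = Nat.factorial b * (kk + 1) := by rw [h0]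
  have hB1 : (1 : ℝ) ≤ (b.choose g : ℝ) := by
    exact_mod_cast Nat.one_le_iff_ne_zero.mpr (Nat.choose_pos hhigh).ne'
  have h3b : (b1.choose g1 : ℝ) * (b2.choose g2 : ℝ)
        * ((Nat.factorial g : ℝ) * (Nat.factorial (kk + 1) : ℝ)) ^ δ
      ≤ ((Nat.factorial b : ℝ) * ((kk : ℝ) + 1)) ^ δ := by
    calc (b1.choose g1 : ℝ) * (b2.choose g2 : ℝ)
          * ((Nat.factorial g : ℝ) * (Nat.factorial (kk + 1) : ℝ)) ^ δ
        ≤ (b.choose g : ℝ) ^ δ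
          * ((Nat.factorial g : ℝ) * (Nat.factorial (kk + 1) : ℝ)) ^ δ := by
          apply mul_le_mul_of_nonneg_right _ (by positivity)
          calc (b1.choose g1 : ℝ) * (b2.choose g2 : ℝ) ≤ (b.choose g : ℝ) := by
                exact_mod_cast choose_mul_choose_le' b1 b2 g1 g2
            _ = (b.choose g : ℝ) ^ (1 : ℝ) := (Real.rpow_one _).symm
            _ ≤ (b.choose g : ℝ) ^ δ := Real.rpow_le_rpow_of_exponent_le hB1 hδ
      _ = ((b.choose g : ℝ) * ((Nat.factorial g : ℝ) * (Nat.factorial (kk + 1) : ℝ))) ^ δ :=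
          (Real.mul_rpow (by positivity) (by positivity)).symm
      _ = ((Nat.factorial b : ℝ) * ((kk : ℝ) + 1)) ^ δ := by
          congr 1; exact_mod_cast idB
  have h3c : (((b2 - g2 : ℕ) : ℝ) + 1) ^ (σ - δ) * (((kk : ℝ) + 1) ^ δ * ((kk : ℝ) + 1) ^ (6:ℕ))
      ≤ (((kk : ℝ) + 1) + 1) ^ (6 + 2 * σ) := by
    have he2k : ((b2 - g2 : ℕ) : ℝ) + 1 ≤ (kk : ℝ) + 1 := by
      have : b2 - g2 ≤ kk := by omega
      have := Nat.cast_le (α := ℝ).mpr this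
      linarith
    have step1 : (((b2 - g2 : ℕ) : ℝ) + 1) ^ (σ - δ) ≤ ((kk : ℝ) + 1) ^ (σ - δ) :=
      Real.rpow_le_rpow (by positivity) he2k hσδ
    have hkpos : (0:ℝ) < (kk : ℝ) + 1 := by positivity
    calc (((b2 - g2 : ℕ) : ℝ) + 1) ^ (σ - δ) * (((kk : ℝ) + 1) ^ δ * ((kk : ℝ) + 1) ^ (6:ℕ))
        ≤ ((kk : ℝ) + 1) ^ (σ - δ) * (((kk : ℝ) + 1) ^ δ * ((kk : ℝ) + 1) ^ (6:ℕ)) := by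
          exact mul_le_mul_of_nonneg_right step1 (by positivity)
      _ = ((kk : ℝ) + 1) ^ (σ + 6) := by
          rw [show (((kk : ℝ) + 1) ^ (6:ℕ)) = ((kk : ℝ) + 1) ^ ((6:ℕ):ℝ) from
            (Real.rpow_natCast _ 6).symm, ← Real.rpow_add hkpos, ← Real.rpow_add hkpos]
          congr 1; ring
      _ ≤ (((kk : ℝ) + 1) + 1) ^ (σ + 6) :=
          Real.rpow_le_rpow (by positivity) (by linarith) (by linarith)
      _ ≤ (((kk : ℝ) + 1) + 1) ^ (6 + 2 * σ) :=
          Real.rpow_le_rpow_of_exponent_le (by linarith [hkpos]) (by linarith)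
  have h3 : (b1.choose g1 : ℝ) * (b2.choose g2 : ℝ) * ((kk : ℝ) + 1) ^ (6:ℕ)
        * (((Nat.factorial g2 : ℝ) ^ (σ - δ) * (Nat.factorial g : ℝ) ^ δ)
          * ((Nat.factorial (b2 - g2 + 1) : ℝ) ^ (σ - δ) * (Nat.factorial (kk + 1) : ℝ) ^ δ))
      ≤ (((kk : ℝ) + 1) + 1) ^ (6 + 2 * σ)
        * ((Nat.factorial b2 : ℝ) ^ (σ - δ) * (Nat.factorial b : ℝ) ^ δ) := by
    calc (b1.choose g1 : ℝ) * (b2.choose g2 : ℝ) * ((kk : ℝ) + 1) ^ (6:ℕ)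
          * (((Nat.factorial g2 : ℝ) ^ (σ - δ) * (Nat.factorial g : ℝ) ^ δ)
            * ((Nat.factorial (b2 - g2 + 1) : ℝ) ^ (σ - δ) * (Nat.factorial (kk + 1) : ℝ) ^ δ))
        = ((Nat.factorial g2 : ℝ) * (Nat.factorial (b2 - g2 + 1) : ℝ)) ^ (σ - δ)
          * ((b1.choose g1 : ℝ) * (b2.choose g2 : ℝ)
            * ((Nat.factorial g : ℝ) * (Nat.factorial (kk + 1) : ℝ)) ^ δ)
          * ((kk : ℝ) + 1) ^ (6:ℕ) := by
          rw [Real.mul_rpow (by positivity) (by positivity),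
            Real.mul_rpow (by positivity) (by positivity)]; ring
      _ ≤ ((Nat.factorial b2 : ℝ) * (((b2 - g2 : ℕ) : ℝ) + 1)) ^ (σ - δ)
          * ((Nat.factorial b : ℝ) * ((kk : ℝ) + 1)) ^ δ * ((kk : ℝ) + 1) ^ (6:ℕ) := by
          apply mul_le_mul_of_nonneg_right _ (by positivity)
          exact mul_le_mul h3a h3b (by positivity) (by positivity)
      _ = (Nat.factorial b2 : ℝ) ^ (σ - δ) * (Nat.factorial b : ℝ) ^ δ
          * ((((b2 - g2 : ℕ) : ℝ) + 1) ^ (σ - δ)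
            * (((kk : ℝ) + 1) ^ δ * ((kk : ℝ) + 1) ^ (6:ℕ))) := by
          rw [Real.mul_rpow (by positivity) (by positivity),
            Real.mul_rpow (by positivity) (by positivity)]; ring
      _ ≤ (Nat.factorial b2 : ℝ) ^ (σ - δ) * (Nat.factorial b : ℝ) ^ δ
          * ((((kk : ℝ) + 1) + 1) ^ (6 + 2 * σ)) :=
          mul_le_mul_of_nonneg_left h3c (by positivity)
      _ = (((kk : ℝ) + 1) + 1) ^ (6 + 2 * σ)
          * ((Nat.factorial b2 : ℝ) ^ (σ - δ) * (Nat.factorial b : ℝ) ^ δ) := by ring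
  calc (b1.choose g1 : ℝ) * (b2.choose g2 : ℝ)
        * (ρ ^ (b + 1) * ((b : ℝ) + 1) ^ (6 + 2 * σ)) * ((kk : ℝ) + 1) ^ (6:ℕ)
        * (((Nat.factorial g2 : ℝ) ^ (σ - δ) * (Nat.factorial g : ℝ) ^ δ)
          * ((Nat.factorial (b2 - g2 + 1) : ℝ) ^ (σ - δ) * (Nat.factorial (kk + 1) : ℝ) ^ δ))
      = ρ ^ (b + 1) * ((b : ℝ) + 1) ^ (6 + 2 * σ)
        * ((b1.choose g1 : ℝ) * (b2.choose g2 : ℝ) * ((kk : ℝ) + 1) ^ (6:ℕ)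
          * (((Nat.factorial g2 : ℝ) ^ (σ - δ) * (Nat.factorial g : ℝ) ^ δ)
            * ((Nat.factorial (b2 - g2 + 1) : ℝ) ^ (σ - δ)
              * (Nat.factorial (kk + 1) : ℝ) ^ δ))) := by ring
    _ ≤ (16 / ρ₀ ^ 2 * (ρ ^ (g + 1) * ρ ^ (kk + 1 + 1)))
        * (2 ^ (6 + 2 * σ) * ((g : ℝ) + 1) ^ (6 + 2 * σ))
        * ((((kk : ℝ) + 1) + 1) ^ (6 + 2 * σ)
          * ((Nat.factorial b2 : ℝ) ^ (σ - δ) * (Nat.factorial b : ℝ) ^ δ)) := by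
        exact mul_le_mul (mul_le_mul hρpow hpow2 (by positivity) (by positivity)) h3
          (by positivity) (by positivity)
    _ = 2 ^ (6 + 2 * σ) * (16 / ρ₀ ^ 2)
        * ((ρ ^ (g + 1) * ((g : ℝ) + 1) ^ (6 + 2 * σ)
            * (ρ ^ (kk + 1 + 1) * (((kk : ℝ) + 1) + 1) ^ (6 + 2 * σ)))
          * ((Nat.factorial b2 : ℝ) ^ (σ - δ) * (Nat.factorial b : ℝ) ^ δ)) := by ring
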